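/- arXiv:1711.05786 — 5 statements merged into one kernel-verified Lean document; each statement's English description precedes it below -/
import Mathlib

section
/- For the Legendre polynomials defined by p_0 = 1, p_1 = x, and the recursion (n+1) p_{n+1}(x) = (2n+1) x p_n(x) - n p_{n-1}(x), one has the orthogonality relation ∫_{-1}^{1} p_m(x) p_n(x) dx = (2/(2n+1)) δ_{mn}. -/
/-!
The polynomials `P n` defined by the recurrence satisfy the Legendre equation in Sturm–Liouville
form, `((1 - x²) P_n')' = -n(n+1) P_n`, which follows from the recurrence through Bonnet's
derivative identities. Hence `(1 - x²)(P_m' P_n - P_m P_n')` is an antiderivative of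
`(n(n+1) - m(m+1)) P_m P_n` vanishing at `±1`, which gives orthogonality for `m ≠ n`.
Pairing the recurrence with `P_n` and with `P_{n+2}` and using orthogonality gives
`(2n+3) ‖P_{n+1}‖² = (2n+1) ‖P_n‖²`, and `‖P_0‖² = 2`.
-/

open Polynomial

section Legendre

variable (K : Type*) [Field K]

noncomputable def legendre : ℕ → K[X]
  | 0 => 1
  | 1 => X
  | n + 2 => C ((n : K) + 2)⁻¹ *
      (C (2 * (n : K) + 3) * (X * legendre (n + 1)) - C ((n : K) + 1) * legendre n)

variable {K}

@[simp] lemma legendre_zero : legendre K 0 = 1 := rfl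

@[simp] lemma legendre_one : legendre K 1 = X := rfl

variable [CharZero K]

lemma legendre_recurrence (n : ℕ) :
    ((n : K[X]) + 2) * legendre K (n + 2)
      = (2 * (n : K[X]) + 3) * (X * legendre K (n + 1)) - ((n : K[X]) + 1) * legendre K n := by
  have hn : (n : K) + 2 ≠ 0 := by exact_mod_cast (n + 1).succ_ne_zero
  have hC : ((n : K[X]) + 2) * C ((n : K) + 2)⁻¹ = 1 := by
    rw [show (n : K[X]) + 2 = C ((n : K) + 2) by simp [C_ofNat], ← C_mul, mul_inv_cancel₀ hn, C_1]
  rw [legendre, ← mul_assoc, hC, one_mul]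
  simp only [map_add, map_mul, C_eq_natCast, C_ofNat, C_1]

lemma derivative_legendre_recurrences (n : ℕ) :
    derivative (legendre K (n + 1)) = ((n : K[X]) + 1) * legendre K n + X * derivative (legendre K n)
    ∧ X * derivative (legendre K (n + 1)) - derivative (legendre K n)
      = ((n : K[X]) + 1) * legendre K (n + 1) := by
  induction n with
  | zero => constructor <;> simp
  | succ n ih =>
    obtain ⟨hderiv, hXderiv⟩ := ih
    have hn : (n : K[X]) + 2 ≠ 0 := by exact_mod_cast (n + 1).succ_ne_zero
    have hrec_deriv := congrArg derivative (legendre_recurrence (K := K) n)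
    simp only [derivative_mul, derivative_sub, derivative_add, derivative_natCast,
      derivative_ofNat, derivative_X, derivative_one, zero_mul, one_mul, zero_add, add_zero,
      mul_zero] at hrec_deriv
    push_cast
    constructor
    · apply mul_left_cancel₀ hn
      linear_combination hrec_deriv + ((n : K[X]) + 1) * hXderiv
    · apply mul_left_cancel₀ hn
      linear_combination X * hrec_deriv + (2 * (n : K[X]) + 3) * X * hXderiv
        - ((n : K[X]) + 2) * hderiv - ((n : K[X]) + 2) * legendre_recurrence (K := K) n

lemma derivative_one_sub_X_sq_mul_derivative_legendre (n : ℕ) :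
    derivative ((1 - X ^ 2) * derivative (legendre K n))
      = -((n : K[X]) * ((n : K[X]) + 1)) * legendre K n := by
  cases n with
  | zero => simp
  | succ n =>
    obtain ⟨hderiv, hXderiv⟩ := derivative_legendre_recurrences (K := K) n
    have h : (1 - X ^ 2) * derivative (legendre K (n + 1))
        = ((n : K[X]) + 1) * (legendre K n - X * legendre K (n + 1)) := by
      linear_combination hderiv - X * hXderiv
    rw [h]
    simp only [derivative_mul, derivative_sub, derivative_add, derivative_natCast,
      derivative_one, derivative_X, zero_mul, zero_add, one_mul]
    push_cast
    linear_combination -((n : K[X]) + 1) * hXderiv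

lemma derivative_legendre_wronskian (m n : ℕ) :
    derivative ((1 - X ^ 2) * (derivative (legendre K m) * legendre K n
        - legendre K m * derivative (legendre K n)))
      = (((n * (n + 1) : ℕ) : K[X]) - ((m * (m + 1) : ℕ) : K[X]))
        * (legendre K m * legendre K n) := by
  rw [show ∀ A B : K[X], (1 - X ^ 2) * (derivative A * B - A * derivative B)
      = (1 - X ^ 2) * derivative A * B - A * ((1 - X ^ 2) * derivative B) from fun _ _ => by ring,
    derivative_sub, derivative_mul (f := (1 - X ^ 2) * _), derivative_mul (f := legendre K m),
    derivative_one_sub_X_sq_mul_derivative_legendre,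
    derivative_one_sub_X_sq_mul_derivative_legendre]
  push_cast
  ring

theorem eq_eval_legendre_of_recurrence {p : ℕ → K → K} (h0 : ∀ x, p 0 x = 1)
    (h1 : ∀ x, p 1 x = x)
    (hrec : ∀ (n : ℕ) (x : K),
      ((n : K) + 2) * p (n + 2) x = (2 * (n : K) + 3) * x * p (n + 1) x - ((n : K) + 1) * p n x) :
    ∀ n x, p n x = (legendre K n).eval x
  | 0, x => by simp [h0]
  | 1, x => by simp [h1]
  | n + 2, x => by
    have hn : (n : K) + 2 ≠ 0 := by exact_mod_cast (n + 1).succ_ne_zero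
    have h := congrArg (eval x) (legendre_recurrence (K := K) n)
    simp only [eval_mul, eval_sub, eval_add, eval_natCast, eval_ofNat, eval_one, eval_X] at h
    apply mul_left_cancel₀ hn
    rw [hrec, h, eq_eval_legendre_of_recurrence h0 h1 hrec n x,
      eq_eval_legendre_of_recurrence h0 h1 hrec (n + 1) x]
    ring

end Legendre

lemma mul_succ_injective : Function.Injective fun k : ℕ => k * (k + 1) :=
  StrictMono.injective fun _ _ h => Nat.mul_lt_mul'' h (Nat.succ_lt_succ h)

noncomputable def integralNegOneOne : ℝ[X] →ₗ[ℝ] ℝ where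
  toFun Q := ∫ x in (-1 : ℝ)..1, Q.eval x
  map_add' P Q := by
    simpa using intervalIntegral.integral_add (P.continuous.intervalIntegrable _ _)
      (Q.continuous.intervalIntegrable _ _)
  map_smul' a Q := by simp

lemma integralNegOneOne_apply (Q : ℝ[X]) :
    integralNegOneOne Q = ∫ x in (-1 : ℝ)..1, Q.eval x := rfl

lemma integralNegOneOne_C_mul (a : ℝ) (Q : ℝ[X]) :
    integralNegOneOne (C a * Q) = a * integralNegOneOne Q := by
  rw [C_mul', map_smul, smul_eq_mul]

lemma integralNegOneOne_one : integralNegOneOne 1 = 2 := by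
  norm_num [integralNegOneOne_apply]

lemma integralNegOneOne_derivative (Q : ℝ[X]) :
    integralNegOneOne (derivative Q) = Q.eval 1 - Q.eval (-1) :=
  intervalIntegral.integral_eq_sub_of_hasDerivAt (fun x _ => Q.hasDerivAt x)
    (Q.derivative.continuous.intervalIntegrable _ _)

lemma integral_legendre_mul_legendre_of_ne {m n : ℕ} (h : m ≠ n) :
    integralNegOneOne (legendre ℝ m * legendre ℝ n) = 0 := by
  have hev : ((n * (n + 1) : ℕ) : ℝ) - ((m * (m + 1) : ℕ) : ℝ) ≠ 0 :=
    sub_ne_zero.2 (Nat.cast_injective.ne (mul_succ_injective.ne h.symm))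
  have key := congrArg integralNegOneOne (derivative_legendre_wronskian (K := ℝ) m n)
  have hboundary (Q : ℝ[X]) : ((1 - X ^ 2) * Q).eval 1 - ((1 - X ^ 2) * Q).eval (-1) = 0 := by
    simp
  rw [integralNegOneOne_derivative, hboundary, ← C_eq_natCast, ← C_eq_natCast, ← C_sub,
    integralNegOneOne_C_mul] at key
  exact (mul_eq_zero.1 key.symm).resolve_left hev

lemma integral_X_mul_legendre_succ_mul_legendre (n : ℕ) :
    (2 * (n : ℝ) + 3) * integralNegOneOne (X * legendre ℝ (n + 1) * legendre ℝ n)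
      = ((n : ℝ) + 1) * integralNegOneOne (legendre ℝ n * legendre ℝ n) := by
  have h : C ((n : ℝ) + 2) * (legendre ℝ (n + 2) * legendre ℝ n)
      = C (2 * (n : ℝ) + 3) * (X * legendre ℝ (n + 1) * legendre ℝ n)
        - C ((n : ℝ) + 1) * (legendre ℝ n * legendre ℝ n) := by
    simp only [map_add, map_mul, C_eq_natCast, C_ofNat, C_1]
    linear_combination legendre ℝ n * legendre_recurrence (K := ℝ) n
  have key := congrArg integralNegOneOne h
  rw [map_sub, integralNegOneOne_C_mul, integralNegOneOne_C_mul, integralNegOneOne_C_mul,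
    integral_legendre_mul_legendre_of_ne (m := n + 2) (n := n) (by omega), mul_zero] at key
  linarith

lemma integral_legendre_succ_mul_self (n : ℕ) :
    ((n : ℝ) + 1) * integralNegOneOne (legendre ℝ (n + 1) * legendre ℝ (n + 1))
      = (2 * (n : ℝ) + 1) * integralNegOneOne (X * legendre ℝ (n + 1) * legendre ℝ n) := by
  cases n with
  | zero => simp
  | succ n =>
    have h : C ((n : ℝ) + 2) * (legendre ℝ (n + 2) * legendre ℝ (n + 2))
        = C (2 * (n : ℝ) + 3) * (X * legendre ℝ (n + 2) * legendre ℝ (n + 1))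
          - C ((n : ℝ) + 1) * (legendre ℝ n * legendre ℝ (n + 2)) := by
      simp only [map_add, map_mul, C_eq_natCast, C_ofNat, C_1]
      linear_combination legendre ℝ (n + 2) * legendre_recurrence (K := ℝ) n
    have key := congrArg integralNegOneOne h
    rw [map_sub, integralNegOneOne_C_mul, integralNegOneOne_C_mul, integralNegOneOne_C_mul,
      integral_legendre_mul_legendre_of_ne (m := n) (n := n + 2) (by omega), mul_zero,
      sub_zero] at key
    push_cast
    linear_combination key

lemma integral_legendre_mul_self (n : ℕ) :
    integralNegOneOne (legendre ℝ n * legendre ℝ n) = 2 / (2 * (n : ℝ) + 1) := by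
  suffices h : (2 * (n : ℝ) + 1) * integralNegOneOne (legendre ℝ n * legendre ℝ n) = 2 by
    rw [eq_div_iff (by positivity), mul_comm, h]
  induction n with
  | zero => simp [integralNegOneOne_one]
  | succ n ih =>
    have hcross := integral_X_mul_legendre_succ_mul_legendre n
    have hsucc := integral_legendre_succ_mul_self n
    have hn : (n : ℝ) + 1 ≠ 0 := by positivity
    apply mul_left_cancel₀ hn
    push_cast
    linear_combination (2 * (n : ℝ) + 3) * hsucc + (2 * (n : ℝ) + 1) * hcross + ((n : ℝ) + 1) * ih

/-- Orthogonality of the Legendre polynomials defined by the standard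
three-term recursion: `∫_{-1}^1 p m x * p n x dx = (2/(2n+1)) δ_{mn}`. -/
theorem legendre_orthogonality
    (p : ℕ → ℝ → ℝ)
    (hp0 : ∀ x, p 0 x = 1)
    (hp1 : ∀ x, p 1 x = x)
    (hrec : ∀ (n : ℕ) (x : ℝ),
      ((n : ℝ) + 2) * p (n + 2) x
        = (2 * (n : ℝ) + 3) * x * p (n + 1) x - ((n : ℝ) + 1) * p n x)
    (m n : ℕ) :
    ∫ x in (-1 : ℝ)..1, p m x * p n x
      = if m = n then 2 / (2 * (n : ℝ) + 1) else 0 := by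
  have hp := eq_eval_legendre_of_recurrence hp0 hp1 hrec
  simp_rw [hp, ← eval_mul, ← integralNegOneOne_apply]
  split_ifs with h
  · subst h
    exact integral_legendre_mul_self m
  · exact integral_legendre_mul_legendre_of_ne h
end

section
/- Let F: D ⊂ ℝ^n → ℝ^n be continuously differentiable on the open set D, and suppose there exist an open ball B(x^0, r) ⊂ D and γ > 0 such that ‖(∇F(x))^{-1}‖ ≤ γ for all x ∈ B(x^0, r) and r > γ ‖F(x^0)‖. Then F(x) = 0 has a solution in B(x^0, r). -/
/-!
Fix `γ‖F x₀‖ < R < r` and `κ = ‖F x₀‖ / R < γ⁻¹`. By the quantitative inverse function theorem,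
for every `x` near which `F` is strictly differentiable with `‖F'(x)⁻¹‖ ≤ γ`, the image of
`closedBall x ε` contains `closedBall (F x) (κ ε)` for all small `ε > 0`. Follow the segment from
`F x₀` to `0`: the set of `t ∈ [0, 1]` such that `(1 - t) F x₀` has a preimage within `t R` of
`x₀` is closed by compactness of `closedBall x₀ R` and open to the right by the local covering
property, so it contains `t = 1`.
-/

open Metric Set Filter Topology

section

variable {E F : Type*} [MetricSpace E] [ProperSpace E] [NormedAddCommGroup F] [NormedSpace ℝ F]

theorem isClosed_setOf_exists_mem_closedBall_eq_add_smul {f : E → F} {x₀ : E} {R : ℝ}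
    (hR : 0 ≤ R) (hf : ContinuousOn f (closedBall x₀ R)) (y₀ v : F) :
    IsClosed ({t : ℝ | ∃ x ∈ closedBall x₀ (t * R), f x = y₀ + t • v} ∩ Icc 0 1) := by
  set K : Set (ℝ × E) := Icc 0 1 ×ˢ closedBall x₀ R
  have hg : ContinuousOn (fun p : ℝ × E => f p.2 - (y₀ + p.1 • v)) K :=
    (hf.comp continuous_snd.continuousOn fun _ hp => hp.2).sub (by fun_prop)
  have hT : IsCompact (K ∩ (fun p : ℝ × E => f p.2 - (y₀ + p.1 • v)) ⁻¹' {0} ∩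
      {p | dist p.2 x₀ ≤ p.1 * R}) :=
    (isCompact_Icc.prod (isCompact_closedBall x₀ R)).of_isClosed_subset
      ((hg.preimage_isClosed_of_isClosed (isClosed_Icc.prod isClosed_closedBall)
        isClosed_singleton).inter (isClosed_le (by fun_prop) (by fun_prop)))
      (inter_subset_left.trans inter_subset_left)
  convert (hT.image continuous_fst).isClosed using 1
  ext t
  simp only [mem_inter_iff, mem_ofPred_eq, mem_Icc, mem_image, mem_preimage, mem_singleton_iff,
    sub_eq_zero, Prod.exists, K, mem_prod, mem_closedBall]
  constructor
  · rintro ⟨⟨x, hx, hfx⟩, ht0, ht1⟩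
    exact ⟨t, x, ⟨⟨⟨⟨ht0, ht1⟩, hx.trans (by nlinarith)⟩, hfx⟩, hx⟩, rfl⟩
  · rintro ⟨t, x, ⟨⟨⟨ht, -⟩, hfx⟩, hx⟩, rfl⟩
    exact ⟨⟨x, hx, hfx⟩, ht⟩

theorem closedBall_subset_image_closedBall_of_eventually {f : E → F} {x₀ : E} {R κ : ℝ}
    (hR : 0 < R) (hf : ContinuousOn f (closedBall x₀ R))
    (hloc : ∀ x ∈ closedBall x₀ R,
      ∀ᶠ ε in 𝓝[>] 0, closedBall (f x) (κ * ε) ⊆ f '' closedBall x ε) :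
    closedBall (f x₀) (κ * R) ⊆ f '' closedBall x₀ R := by
  intro y hy
  have hv : ‖y - f x₀‖ ≤ κ * R := by rwa [← dist_eq_norm]
  set S := {t : ℝ | ∃ x ∈ closedBall x₀ (t * R), f x = f x₀ + t • (y - f x₀)}
  have hstep : ∀ t ∈ S ∩ Ico 0 1, ∀ s ∈ Ioi t, (S ∩ Ioc t s).Nonempty := by
    rintro t ⟨⟨x, hx, hfx⟩, ht0, ht1⟩ s hts
    have hxR : x ∈ closedBall x₀ R := closedBall_subset_closedBall (by nlinarith) hx
    obtain ⟨ε, hε, hε0, hεs⟩ :=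
      ((hloc x hxR).and (Ioc_mem_nhdsGT (mul_pos (sub_pos.2 hts) hR))).exists
    have hnext : f x₀ + (t + ε / R) • (y - f x₀) ∈ closedBall (f x) (κ * ε) := by
      rw [mem_closedBall, hfx, dist_eq_norm, add_smul, add_sub_add_left_eq_sub,
        add_sub_cancel_left, norm_smul, Real.norm_of_nonneg (by positivity)]
      calc ε / R * ‖y - f x₀‖ ≤ ε / R * (κ * R) := by gcongr
        _ = κ * ε := by field_simp
    obtain ⟨x', hx', hfx'⟩ := hε hnext
    refine ⟨t + ε / R, ⟨x', ?_, hfx'⟩, lt_add_of_pos_right t (by positivity), ?_⟩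
    · calc dist x' x₀ ≤ dist x' x + dist x x₀ := dist_triangle _ _ _
        _ ≤ ε + t * R := add_le_add hx' hx
        _ = (t + ε / R) * R := by field_simp; ring
    · rw [← le_sub_iff_add_le', div_le_iff₀ hR]
      exact hεs
  obtain ⟨x, hx, hfx⟩ := (isClosed_setOf_exists_mem_closedBall_eq_add_smul hR.le hf _ _
    ).Icc_subset_of_forall_exists_gt ⟨x₀, by simp, by simp⟩ hstep ⟨zero_le_one, le_rfl⟩
  exact ⟨x, by simpa using hx, by simpa using hfx⟩

end

theorem HasStrictFDerivAt.eventually_closedBall_subset_image {𝕜 E F : Type*}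
    [NontriviallyNormedField 𝕜] [NormedAddCommGroup E] [NormedSpace 𝕜 E] [CompleteSpace E]
    [NormedAddCommGroup F] [NormedSpace 𝕜 F]
    {f : E → F} {f' : E ≃L[𝕜] F} {a : E} (hf : HasStrictFDerivAt f (f' : E →L[𝕜] F) a)
    {γ κ : ℝ} (hγ : 0 < γ) (hf'γ : ‖(f'.symm : F →L[𝕜] E)‖ ≤ γ) (hκ : κ < γ⁻¹) :
    ∀ᶠ ε in 𝓝[>] 0, closedBall (f a) (κ * ε) ⊆ f '' closedBall a ε := by
  obtain ⟨s, hs, hfs⟩ := hf.approximates_deriv_on_nhds (c := (γ⁻¹ - κ).toNNReal)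
    (Or.inr (Real.toNNReal_pos.2 (sub_pos.2 hκ)))
  -- bound `γ` rather than `‖f'.symm‖`, which is `0` (with junk inverse `0`) on trivial spaces
  let g : (f' : E →L[𝕜] F).NonlinearRightInverse :=
    { toFun := f'.symm
      nnnorm := ⟨γ, hγ.le⟩
      bound' := fun y => ((f'.symm : F →L[𝕜] E).le_opNorm y).trans
        (mul_le_mul_of_nonneg_right hf'γ (norm_nonneg y))
      right_inv' := f'.apply_symm_apply }
  filter_upwards [(eventually_closedBall_subset hs).filter_mono nhdsWithin_le_nhds,
    self_mem_nhdsWithin] with ε hεs hε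
  have hradius : ((g.nnnorm : ℝ)⁻¹ - (γ⁻¹ - κ).toNNReal) * ε = κ * ε := by
    rw [Real.coe_toNNReal _ (sub_pos.2 hκ).le]
    change (γ⁻¹ - (γ⁻¹ - κ)) * ε = κ * ε
    ring
  rw [← hradius]
  exact hfs.surjOn_closedBall_of_nonlinearRightInverse g hε.le hεs

/-- Quantitative Newton-type existence lemma: if `F` is `C¹` on an open set `D`
containing a ball `B(x₀,r)`, the derivative is invertible with inverse bounded
by `γ` on the ball, and `r > γ‖F x₀‖`, then `F` has a zero in the ball. -/
theorem newton_existence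
    {n : ℕ} (F : EuclideanSpace ℝ (Fin n) → EuclideanSpace ℝ (Fin n))
    (D : Set (EuclideanSpace ℝ (Fin n))) (hD : IsOpen D)
    (hF : ContDiffOn ℝ 1 F D)
    (x₀ : EuclideanSpace ℝ (Fin n)) (r γ : ℝ) (hγ : 0 < γ)
    (hball : ball x₀ r ⊆ D)
    (F' : EuclideanSpace ℝ (Fin n) →
      (EuclideanSpace ℝ (Fin n) ≃L[ℝ] EuclideanSpace ℝ (Fin n)))
    (hF' : ∀ x ∈ ball x₀ r, HasFDerivAt F (F' x :
      EuclideanSpace ℝ (Fin n) →L[ℝ] EuclideanSpace ℝ (Fin n)) x)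
    (hinv : ∀ x ∈ ball x₀ r, ‖((F' x).symm :
      EuclideanSpace ℝ (Fin n) →L[ℝ] EuclideanSpace ℝ (Fin n))‖ ≤ γ)
    (hr : r > γ * ‖F x₀‖) :
    ∃ x ∈ ball x₀ r, F x = 0 := by
  obtain ⟨R, hγR, hRr⟩ := exists_between hr
  have hR : 0 < R := lt_of_le_of_lt (by positivity) hγR
  have hRball : closedBall x₀ R ⊆ ball x₀ r := closedBall_subset_ball hRr
  have hκ : ‖F x₀‖ / R < γ⁻¹ := by
    rw [div_lt_iff₀ hR, ← div_eq_inv_mul, lt_div_iff₀ hγ, mul_comm]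
    exact hγR
  have hloc (x : EuclideanSpace ℝ (Fin n)) (hx : x ∈ closedBall x₀ R) :
      ∀ᶠ ε in 𝓝[>] 0, closedBall (F x) (‖F x₀‖ / R * ε) ⊆ F '' closedBall x ε :=
    ((hF.contDiffAt (hD.mem_nhds (hball (hRball hx)))).hasStrictFDerivAt' (hF' x (hRball hx))
      one_ne_zero).eventually_closedBall_subset_image hγ (hinv x (hRball hx)) hκ
  have hcont : ContinuousOn F (closedBall x₀ R) := fun x hx =>
    (hF' x (hRball hx)).continuousAt.continuousWithinAt
  have hzero : (0 : EuclideanSpace ℝ (Fin n)) ∈ closedBall (F x₀) (‖F x₀‖ / R * R) := by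
    rw [div_mul_cancel₀ _ hR.ne', mem_closedBall, dist_zero_left]
  obtain ⟨x, hx, hFx⟩ := closedBall_subset_image_closedBall_of_eventually hR hcont hloc hzero
  exact ⟨x, hRball hx, hFx⟩
end

section
/- Let f ∈ C^1([-1,1]) with f(θ†) = 0 and f'(θ†) ≠ 0 for some θ† ∈ (-1,1), and let (f_M) be a sequence of continuously differentiable functions with ‖f_M − f‖_∞ → 0 and ‖f'_M − f'‖_∞ → 0. Then for all sufficiently large M there exists θ*_M ∈ (-1,1) minimizing f_M^2 over [-1,1], and θ*_M → θ† with f_M(θ*_M) → 0 as M → ∞. -/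
open Filter Set Topology

/-!
A minimizer of `f_M²` need not be found by analysing the minimization problem at all: since
`f'(θ†) ≠ 0`, `f` changes sign across `θ†` at points arbitrarily close to it, pointwise
convergence transports these sign changes to `f_M`, and the intermediate value theorem then gives
zeros of `f_M` arbitrarily close to `θ†` for large `M`. Any zero of `f_M` is a global minimizer of
`f_M²`, and choosing the zero nearest to `θ†` makes the minimizers converge to `θ†`.
-/

theorem HasDerivAt.eventually_mul_sub_mul_sub_pos {f : ℝ → ℝ} {a x₀ : ℝ}
    (hf : HasDerivAt f a x₀) (ha : a ≠ 0) :
    ∀ᶠ x in 𝓝[≠] x₀, 0 < a * (f x - f x₀) * (x - x₀) := by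
  have hlim : Tendsto (fun x => a * slope f x₀ x) (𝓝[≠] x₀) (𝓝 (a * a)) :=
    (hasDerivAt_iff_tendsto_slope.1 hf).const_mul a
  filter_upwards [hlim.eventually (lt_mem_nhds (mul_self_pos.2 ha)), self_mem_nhdsWithin]
    with x hx hne
  have hx₀ : x - x₀ ≠ 0 := sub_ne_zero.2 hne
  rw [slope_def_field] at hx
  calc 0 < a * ((f x - f x₀) / (x - x₀)) * (x - x₀) ^ 2 := by positivity
    _ = a * (f x - f x₀) * (x - x₀) := by field_simp

theorem exists_mem_Ioo_eq_zero_of_mul_neg {g : ℝ → ℝ} {a b : ℝ} (hab : a ≤ b)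
    (hg : ContinuousOn g (Icc a b)) (hsign : g a * g b < 0) : ∃ z ∈ Ioo a b, g z = 0 := by
  rcases mul_neg_iff.1 hsign with ⟨ha, hb⟩ | ⟨ha, hb⟩
  · exact intermediate_value_Ioo' hab hg ⟨hb, ha⟩
  · exact intermediate_value_Ioo hab hg ⟨ha, hb⟩

theorem HasDerivAt.eventually_exists_zero_mem_ball {ι : Type*} {l : Filter ι} {f : ℝ → ℝ}
    {g : ι → ℝ → ℝ} {a x₀ r : ℝ} (hf : HasDerivAt f a x₀) (h0 : f x₀ = 0) (ha : a ≠ 0)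
    (hg : ∀ i, Continuous (g i)) (hlim : ∀ᶠ x in 𝓝 x₀, Tendsto (fun i => g i x) l (𝓝 (f x)))
    (hr : 0 < r) : ∀ᶠ i in l, ∃ z ∈ Metric.ball x₀ r, g i z = 0 := by
  have hsign := hf.eventually_mul_sub_mul_sub_pos ha
  obtain ⟨x, ⟨hxs, hxlim⟩, hx⟩ := (((hsign.filter_mono (nhdsLT_le_nhdsNE x₀)).and
    (nhdsWithin_le_nhds hlim)).and (Ioo_mem_nhdsLT (by linarith : x₀ - r < x₀))).exists
  obtain ⟨y, ⟨hys, hylim⟩, hy⟩ := (((hsign.filter_mono (nhdsGT_le_nhdsNE x₀)).and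
    (nhdsWithin_le_nhds hlim)).and (Ioo_mem_nhdsGT (by linarith : x₀ < x₀ + r))).exists
  rw [h0, sub_zero] at hxs hys
  have hax : a * f x < 0 := neg_of_mul_pos_left hxs (by linarith [hx.2])
  have hay : 0 < a * f y := pos_of_mul_pos_left hys (by linarith [hy.1])
  have hxy : f x * f y < 0 := by nlinarith [mul_self_pos.2 ha]
  filter_upwards [(hxlim.mul hylim).eventually (gt_mem_nhds hxy)] with i hi
  obtain ⟨z, hz, hz0⟩ :=
    exists_mem_Ioo_eq_zero_of_mul_neg (by linarith [hx.2, hy.1]) (hg i).continuousOn hi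
  refine ⟨z, ?_, hz0⟩
  rw [Real.ball_eq_Ioo]
  exact ⟨by linarith [hz.1, hx.1], by linarith [hz.2, hy.2]⟩

theorem exists_nearest_zero {ι X Y : Type*} [MetricSpace X] [TopologicalSpace Y] [T1Space Y]
    [Zero Y] {K : Set X} (hK : IsCompact K) {g : ι → X → Y} (hg : ∀ i, Continuous (g i))
    (x₀ : X) :
    ∃ t : ι → X, ∀ i, ∀ z ∈ K, g i z = 0 → g i (t i) = 0 ∧ dist (t i) x₀ ≤ dist z x₀ := by
  have hnearest : ∀ i, ∃ t, ∀ z ∈ K, g i z = 0 → g i t = 0 ∧ dist t x₀ ≤ dist z x₀ := by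
    intro i
    by_cases hzero : ∃ z ∈ K, g i z = 0
    · obtain ⟨z, hzK, hz0⟩ := hzero
      obtain ⟨t, ⟨-, ht0⟩, hmin⟩ :=
        (hK.inter_right (isClosed_singleton.preimage (hg i))).exists_isMinOn ⟨z, hzK, hz0⟩
          (continuous_id.dist continuous_const).continuousOn
      exact ⟨t, fun w hwK hw0 => ⟨ht0, hmin ⟨hwK, hw0⟩⟩⟩
    · exact ⟨x₀, fun z hzK hz0 => (hzero ⟨z, hzK, hz0⟩).elim⟩
  choose t ht using hnearest
  exact ⟨t, ht⟩

theorem one_dim_ls_minimizer_convergence_general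
    (f : ℝ → ℝ) (θd : ℝ)
    (hf : ContDiffOn ℝ 1 f (Set.Icc (-1 : ℝ) 1))
    (hθ : θd ∈ Set.Ioo (-1 : ℝ) 1)
    (hroot : f θd = 0)
    (hderiv : derivWithin f (Set.Icc (-1 : ℝ) 1) θd ≠ 0)
    (fM : ℕ → ℝ → ℝ)
    (hfM : ∀ M, ContDiff ℝ 1 (fM M))
    (hconv : TendstoUniformlyOn fM f atTop (Set.Icc (-1 : ℝ) 1)) :
    ∃ (N : ℕ) (θs : ℕ → ℝ),
      (∀ M ≥ N, θs M ∈ Set.Ioo (-1 : ℝ) 1 ∧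
        IsMinOn (fun θ => (fM M θ) ^ 2) (Set.Icc (-1 : ℝ) 1) (θs M)) ∧
      Tendsto θs atTop (nhds θd) ∧
      Tendsto (fun M => fM M (θs M)) atTop (nhds 0) := by
  have hIcc : Icc (-1 : ℝ) 1 ∈ 𝓝 θd := Icc_mem_nhds hθ.1 hθ.2
  have hda : HasDerivAt f (derivWithin f (Icc (-1) 1) θd) θd :=
    ((hf.differentiableOn one_ne_zero θd (Ioo_subset_Icc_self hθ)).hasDerivWithinAt).hasDerivAt hIcc
  have hcont : ∀ M, Continuous (fM M) := fun M => (hfM M).continuous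
  have hlim : ∀ᶠ x in 𝓝 θd, Tendsto (fun M => fM M x) atTop (𝓝 (f x)) :=
    Filter.mem_of_superset hIcc fun x hx => hconv.tendsto_at hx
  obtain ⟨ε, hε, hball⟩ := Metric.isOpen_iff.1 isOpen_Ioo θd hθ
  obtain ⟨θs, hθs⟩ := exists_nearest_zero isCompact_Icc hcont θd
  have hnear : ∀ r > 0, ∀ᶠ M in atTop, fM M (θs M) = 0 ∧ θs M ∈ Metric.ball θd (min r ε) := by
    intro r hr
    filter_upwards [hda.eventually_exists_zero_mem_ball hroot hderiv hcont hlim (lt_min hr hε)]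
      with M ⟨z, hz, hz0⟩
    obtain ⟨ht0, htz⟩ := hθs M z (Ioo_subset_Icc_self (hball (Metric.ball_subset_ball
      (min_le_right _ _) hz))) hz0
    exact ⟨ht0, htz.trans_lt hz⟩
  obtain ⟨N, hN⟩ := eventually_atTop.1 (hnear ε hε)
  refine ⟨N, θs, fun M hM => ⟨hball (Metric.ball_subset_ball (min_le_right _ _) (hN M hM).2),
    fun x _ => ?_⟩, ?_, ?_⟩
  · change fM M (θs M) ^ 2 ≤ fM M x ^ 2
    rw [(hN M hM).1, zero_pow two_ne_zero]
    exact sq_nonneg _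
  · exact Metric.tendsto_nhds.2 fun r hr =>
      (hnear r hr).mono fun M h => h.2.trans_le (min_le_left _ _)
  · exact tendsto_const_nhds.congr' ((hnear ε hε).mono fun M h => h.1.symm)

/-- One-dimensional convergence of approximate least-squares minimizers:
if `f ∈ C¹([-1,1])` has a nondegenerate zero `θ† ∈ (-1,1)` and `f_M → f`,
`f'_M → f'` uniformly on `[-1,1]`, then for large `M` there are global
minimizers `θ*_M` of `f_M²` on `[-1,1]` lying in `(-1,1)`, with
`θ*_M → θ†` and `f_M(θ*_M) → 0`. -/
theorem one_dim_ls_minimizer_convergence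
    (f : ℝ → ℝ) (θd : ℝ)
    (hf : ContDiffOn ℝ 1 f (Set.Icc (-1 : ℝ) 1))
    (hθ : θd ∈ Set.Ioo (-1 : ℝ) 1)
    (hroot : f θd = 0)
    (hderiv : derivWithin f (Set.Icc (-1 : ℝ) 1) θd ≠ 0)
    (fM : ℕ → ℝ → ℝ)
    (hfM : ∀ M, ContDiff ℝ 1 (fM M))
    (hconv : TendstoUniformlyOn fM f atTop (Set.Icc (-1 : ℝ) 1))
    (hconv' : TendstoUniformlyOn (fun M => deriv (fM M))
      (derivWithin f (Set.Icc (-1 : ℝ) 1)) atTop (Set.Icc (-1 : ℝ) 1)) :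
    ∃ (N : ℕ) (θs : ℕ → ℝ),
      (∀ M ≥ N, θs M ∈ Set.Ioo (-1 : ℝ) 1 ∧
        IsMinOn (fun θ => (fM M θ) ^ 2) (Set.Icc (-1 : ℝ) 1) (θs M)) ∧
      Tendsto θs atTop (nhds θd) ∧
      Tendsto (fun M => fM M (θs M)) atTop (nhds 0) :=
  one_dim_ls_minimizer_convergence_general f θd hf hθ hroot hderiv fM hfM hconv
end

section
/- Let f_1, …, f_K ∈ Γ^M_N be linearly independent with K > max{N, (M+1)^{N−1}}. Then the vectors D_{θ_1}f, …, D_{θ_N}f ∈ (Γ^M_N)^K, where f = (f_1,…,f_K), are linearly independent; consequently the polynomial θ ↦ det(J(θ)^T J(θ)) is not identically zero, where J(θ) is the K×N Jacobian matrix (∂f_i/∂θ_j)(θ), and the set {θ ∈ ℝ^N : rank J(θ) ≤ N−1} is nowhere dense in ℝ^N. -/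
open MvPolynomial Matrix

/-- `Γ^M_N`: the span of the monomials `θ₁^{k₁}⋯θ_N^{k_N}` with `0 ≤ kᵢ ≤ M`. -/
noncomputable def GammaMN (N M : ℕ) : Submodule ℝ (MvPolynomial (Fin N) ℝ) :=
  Submodule.span ℝ
    {q | ∃ k : Fin N → ℕ, (∀ i, k i ≤ M) ∧ q = ∏ i, (X i : MvPolynomial (Fin N) ℝ) ^ k i}

/-! Fix a monomial order and let `D = ∑ⱼ cⱼ ∂ⱼ` with polynomial coefficients `c ≠ 0`. Writing
`(∏ₖ Xₖ) D = ∑ⱼ qⱼ (Xⱼ ∂ⱼ)` and noting that `Xⱼ ∂ⱼ` multiplies the coefficient of `X^μ` by `μⱼ`, the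
top coefficient of `(∏ₖ Xₖ) D p` is `∑ⱼ aⱼ μⱼ` times the leading coefficient of `p`, where `μ` is the
leading exponent of `p` and `a ≠ 0` depends on `D` only. So every nonzero `p ∈ Γ^M_N ∩ ker D` has its
leading exponent among the at most `(M+1)^(N-1)` points of `{0,…,M}^N` on the hyperplane
`∑ⱼ aⱼ μⱼ = 0`, and its coefficients there determine it. Hence for `K > (M+1)^(N-1)` the columns of
the polynomial Jacobian `P` are independent over `ℝ[θ]`, so `det (Pᵀ P) ≠ 0` (pointwise, `Jᵀ J w = 0`
forces `J w = 0`); the rank-deficient set lies in the zero set of this polynomial, which contains no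
box with infinite sides and hence no open set. -/

open scoped MonomialOrder

namespace MvPolynomial

variable {σ R : Type*}

section CommSemiring

variable [CommSemiring R]

theorem coeff_X_mul_pderiv (i : σ) (p : MvPolynomial σ R) (μ : σ →₀ ℕ) :
    coeff μ (X i * pderiv i p) = μ i * coeff μ p := by
  classical
  induction p using induction_on' with
  | monomial s a =>
    rw [X_mul_pderiv_monomial, coeff_smul, coeff_monomial]
    split_ifs with h <;> simp [h, nsmul_eq_mul]
  | add p q hp hq => simp only [map_add, mul_add, coeff_add, hp, hq]

theorem support_X_mul_pderiv_subset (i : σ) (p : MvPolynomial σ R) :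
    (X i * pderiv i p).support ⊆ p.support := fun μ ↦ by
  simpa only [mem_support_iff, coeff_X_mul_pderiv] using right_ne_zero_of_mul

theorem prod_X_mul_sum_mul_pderiv [Fintype σ] [DecidableEq σ] (c : σ → MvPolynomial σ R)
    (p : MvPolynomial σ R) :
    (∏ k, X k) * ∑ j, c j * pderiv j p =
      ∑ j, ((∏ k ∈ Finset.univ.erase j, X k) * c j) * (X j * pderiv j p) := by
  rw [Finset.mul_sum]
  refine Finset.sum_congr rfl fun j _ ↦ ?_
  rw [← Finset.mul_prod_erase _ _ (Finset.mem_univ j)]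
  ring

end CommSemiring

variable [CommRing R] [IsDomain R]

theorem exists_ne_zero_forall_sum_mul_degree_eq_zero [Fintype σ] (m : MonomialOrder σ)
    {c : σ → MvPolynomial σ R} (hc : c ≠ 0) :
    ∃ a : σ → R, a ≠ 0 ∧ ∀ p ≠ 0, ∑ j, c j * pderiv j p = 0 → ∑ j, a j * m.degree p j = 0 := by
  classical
  set q : σ → MvPolynomial σ R := fun j ↦ (∏ k ∈ Finset.univ.erase j, X k) * c j
  have hq : (Finset.univ.filter (q · ≠ 0)).Nonempty := by
    obtain ⟨j, hj⟩ := Function.ne_iff.1 hc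
    exact ⟨j, Finset.mem_filter.2 ⟨Finset.mem_univ j,
      mul_ne_zero (Finset.prod_ne_zero_iff.2 fun k _ ↦ X_ne_zero k) hj⟩⟩
  obtain ⟨i, hi, hmax⟩ := Finset.exists_max_image _ (fun j ↦ m.toSyn (m.degree (q j))) hq
  have hdeg : ∀ j, m.degree (q j) ≼[m] m.degree (q i) := fun j ↦ by
    by_cases hj : q j = 0
    · rw [hj, m.degree_zero, map_zero]
      exact MonomialOrder.zero_le _ _
    · exact hmax j (Finset.mem_filter.2 ⟨Finset.mem_univ j, hj⟩)
  refine ⟨fun j ↦ coeff (m.degree (q i)) (q j), Function.ne_iff.2 ⟨i, ?_⟩, fun p hp hDp ↦ ?_⟩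
  · exact m.coeff_degree_ne_zero_iff.2 (Finset.mem_filter.1 hi).2
  have hcoeff : (∑ j, coeff (m.degree (q i)) (q j) * m.degree p j) * coeff (m.degree p) p = 0 :=
    calc _ = ∑ j, coeff (m.degree (q i) + m.degree p) (q j * (X j * pderiv j p)) := by
          rw [Finset.sum_mul]
          refine Finset.sum_congr rfl fun j _ ↦ ?_
          rw [m.coeff_mul_of_add_of_degree_le (hdeg j)
            (m.degree_le_degree_of_support_subset (support_X_mul_pderiv_subset j p)),
            coeff_X_mul_pderiv]
          ring
      _ = coeff (m.degree (q i) + m.degree p) ((∏ k, X k) * ∑ j, c j * pderiv j p) := by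
          rw [prod_X_mul_sum_mul_pderiv, coeff_sum]
      _ = 0 := by rw [hDp, mul_zero, coeff_zero]
  exact (mul_eq_zero.1 hcoeff).resolve_right (m.coeff_degree_ne_zero_iff.2 hp)

end MvPolynomial

theorem card_subtype_sum_mul_eq_zero_le {R σ : Type*} [CommRing R] [IsDomain R] [CharZero R]
    [Fintype σ] (a : σ → R) {i : σ} (hi : a i ≠ 0) (M : ℕ) :
    Nat.card {g : σ → Fin (M + 1) // ∑ j, a j * (g j : ℕ) = 0} ≤
      (M + 1) ^ (Fintype.card σ - 1) := by
  classical
  have hinj : Function.Injective fun (g : {g : σ → Fin (M + 1) // ∑ j, a j * (g j : ℕ) = 0})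
      (j : {j // j ≠ i}) ↦ g.1 j := by
    rintro ⟨g, hg⟩ ⟨g', hg'⟩ hgg'
    have hoff : ∀ j ≠ i, g j = g' j := fun j hj ↦ congrFun hgg' ⟨j, hj⟩
    rw [Fintype.sum_eq_add_sum_compl i] at hg hg'
    have hsum : ∑ j ∈ {i}ᶜ, a j * (g j : ℕ) = ∑ j ∈ {i}ᶜ, a j * (g' j : ℕ) :=
      Finset.sum_congr rfl fun j hj ↦ by rw [hoff j (by simpa using hj)]
    have hgi : g i = g' i :=
      Fin.val_injective <| Nat.cast_injective (R := R) <| mul_left_cancel₀ hi (by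
        rw [← sub_eq_zero]; linear_combination hg - hg' - hsum)
    simp only [Subtype.mk.injEq]
    funext j
    by_cases hj : j = i
    · exact hj ▸ hgi
    · exact hoff j hj
  calc _ ≤ Nat.card ({j // j ≠ i} → Fin (M + 1)) := Nat.card_le_card_of_injective _ hinj
    _ = (M + 1) ^ (Fintype.card σ - 1) := by
      simp [Fintype.card_subtype_compl]

theorem LinearIndependent.card_le_of_exists_coeff_ne_zero {K σ ι T : Type*} [Field K] [Fintype ι]
    [Finite T] {f : ι → MvPolynomial σ K} (hf : LinearIndependent K f) (e : T → σ →₀ ℕ)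
    (he : ∀ p ∈ Submodule.span K (Set.range f), p ≠ 0 → ∃ t, coeff (e t) p ≠ 0) :
    Fintype.card ι ≤ Nat.card T := by
  have : Fintype T := Fintype.ofFinite T
  let restrict : MvPolynomial σ K →ₗ[K] T → K := LinearMap.pi fun t ↦ lcoeff K (e t)
  have hker : Disjoint (Submodule.span K (Set.range f)) (LinearMap.ker restrict) :=
    Submodule.disjoint_def.2 fun p hp hrp ↦ by
      by_contra hp0
      obtain ⟨t, ht⟩ := he p hp hp0
      exact ht (congrFun (LinearMap.mem_ker.1 hrp) t)
  simpa [Nat.card_eq_fintype_card] using (hf.map hker).fintype_card_le_finrank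

theorem LinearIndependent.card_le_one_of_isEmpty {K σ ι : Type*} [Field K] [IsEmpty σ]
    [Fintype ι] {f : ι → MvPolynomial σ K} (hf : LinearIndependent K f) :
    Fintype.card ι ≤ 1 := by
  suffices Fintype.card ι ≤ Nat.card Unit by simpa
  refine hf.card_le_of_exists_coeff_ne_zero (fun _ ↦ 0) fun p _ hp ↦ ?_
  obtain ⟨μ, hμ⟩ := support_nonempty.2 hp
  exact ⟨(), Subsingleton.elim μ 0 ▸ mem_support_iff.1 hμ⟩

theorem GammaMN_le_restrictSupport (N M : ℕ) :
    GammaMN N M ≤ restrictSupport ℝ {μ | ∀ i, μ i ≤ M} := by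
  refine Submodule.span_le.2 ?_
  rintro _ ⟨k, hk, rfl⟩
  have hmon : ∏ i, (X i : MvPolynomial (Fin N) ℝ) ^ k i =
      monomial (Finsupp.equivFunOnFinite.symm k) 1 := by
    rw [monomial_eq, C_1, one_mul, Finsupp.prod_fintype _ _ fun _ ↦ pow_zero _]
    simp
  rw [SetLike.mem_coe, hmon, monomial_mem_restrictSupport]
  exact Or.inl hk

theorem card_le_of_linearIndependent_of_sum_mul_pderiv_eq_zero {N M : ℕ} {ι : Type*} [Fintype ι]
    {f : ι → MvPolynomial (Fin N) ℝ} (hf : ∀ l, f l ∈ GammaMN N M) (hind : LinearIndependent ℝ f)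
    {c : Fin N → MvPolynomial (Fin N) ℝ} (hc : c ≠ 0)
    (hD : ∀ l, ∑ j, c j * pderiv j (f l) = 0) :
    Fintype.card ι ≤ (M + 1) ^ (N - 1) := by
  obtain ⟨a, ha, hrel⟩ :=
    exists_ne_zero_forall_sum_mul_degree_eq_zero (MonomialOrder.lex (σ := Fin N)) hc
  obtain ⟨i, hi⟩ := Function.ne_iff.1 ha
  have hspan : ∀ p ∈ Submodule.span ℝ (Set.range f),
      p ∈ GammaMN N M ∧ ∑ j, c j * pderiv j p = 0 := by
    intro p hp
    induction hp using Submodule.span_induction with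
    | mem _ h => obtain ⟨l, rfl⟩ := h; exact ⟨hf l, hD l⟩
    | zero => simp
    | add p q _ _ hp hq =>
      exact ⟨add_mem hp.1 hq.1, by simp [mul_add, Finset.sum_add_distrib, hp.2, hq.2]⟩
    | smul r p _ hp =>
      exact ⟨Submodule.smul_mem _ r hp.1, by simp [← Finset.smul_sum, hp.2]⟩
  calc Fintype.card ι ≤ Nat.card {g : Fin N → Fin (M + 1) // ∑ j, a j * (g j : ℕ) = 0} := by
        refine hind.card_le_of_exists_coeff_ne_zero
          (fun g ↦ Finsupp.equivFunOnFinite.symm fun j ↦ g.1 j) fun p hp hp0 ↦ ?_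
        obtain ⟨hpΓ, hDp⟩ := hspan p hp
        set μ := (MonomialOrder.lex (σ := Fin N)).degree p
        have hμ : μ ∈ p.support := MonomialOrder.degree_mem_support hp0
        have hbox : ∀ j, μ j < M + 1 := fun j ↦
          Nat.lt_succ_of_le (GammaMN_le_restrictSupport N M hpΓ hμ j)
        refine ⟨⟨fun j ↦ ⟨μ j, hbox j⟩, hrel p hp0 hDp⟩, ?_⟩
        rw [← mem_support_iff]
        exact (Finsupp.equivFunOnFinite_symm_coe μ).symm ▸ hμ
    _ ≤ (M + 1) ^ (N - 1) := by
        simpa using card_subtype_sum_mul_eq_zero_le a hi M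

theorem MvPolynomial.isNowhereDense_setOf_eval_eq_zero {σ : Type*} [Fintype σ]
    {p : MvPolynomial σ ℝ} (hp : p ≠ 0) : IsNowhereDense {x : σ → ℝ | eval x p = 0} := by
  rw [(isClosed_eq (continuous_eval p) continuous_const).isNowhereDense_iff,
    Set.eq_empty_iff_forall_notMem]
  intro x hx
  obtain ⟨ε, hε, hball⟩ := Metric.isOpen_iff.1 isOpen_interior x hx
  refine hp (funext_set (fun i ↦ Metric.ball (x i) ε) (fun i ↦ ?_) fun y hy ↦ ?_)
  · rw [Real.ball_eq_Ioo]
    exact Set.Ioo_infinite (by linarith)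
  · rw [map_zero]
    have hy' : y ∈ interior {x : σ → ℝ | eval x p = 0} := hball ((ball_pi x hε).symm ▸ hy)
    exact (interior_subset hy' : y ∈ {x : σ → ℝ | eval x p = 0})

theorem Matrix.det_map_transpose_mul_map {R S m n : Type*} [CommRing R] [CommRing S] [Fintype m]
    [Fintype n] [DecidableEq n] (φ : R →+* S) (P : Matrix m n R) :
    ((P.map φ)ᵀ * P.map φ).det = φ (Pᵀ * P).det := by
  rw [← transpose_map, ← Matrix.map_mul, RingHom.map_det, RingHom.mapMatrix_apply]

theorem Matrix.det_transpose_mul_self_ne_zero {K σ m n : Type*} [Field K] [LinearOrder K]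
    [IsStrictOrderedRing K] [Fintype m] [Fintype n] [DecidableEq n]
    {P : Matrix m n (MvPolynomial σ K)} (hP : ∀ v, P *ᵥ v = 0 → v = 0) :
    (Pᵀ * P).det ≠ 0 := by
  intro h
  obtain ⟨v, hv, hPPv⟩ := exists_mulVec_eq_zero_iff.2 h
  refine hv (hP v (funext fun l ↦ MvPolynomial.funext fun x ↦ ?_))
  have hker : ((P.map (eval x))ᵀ * P.map (eval x)) *ᵥ (eval x ∘ v) = 0 := by
    rw [← transpose_map, ← Matrix.map_mul]
    funext i
    rw [← RingHom.map_mulVec, hPPv]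
    rfl
  have hPv : P.map (eval x) *ᵥ (eval x ∘ v) = 0 := LinearMap.mem_ker.1 <|
    ker_mulVecLin_transpose_mul_self (P.map (eval x)) ▸ LinearMap.mem_ker.2 hker
  rw [RingHom.map_mulVec, hPv]
  rfl

theorem Matrix.isNowhereDense_setOf_rank_map_eval_lt {σ m n : Type*} [Fintype σ] [Fintype m]
    [Fintype n] [DecidableEq n] {P : Matrix m n (MvPolynomial σ ℝ)} (hP : (Pᵀ * P).det ≠ 0) :
    IsNowhereDense {x : σ → ℝ | (P.map (eval x)).rank < Fintype.card n} := by
  refine (isNowhereDense_setOf_eval_eq_zero hP).mono fun x hx ↦ ?_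
  by_contra hdet
  have hrank := rank_of_det_ne_zero (A := (P.map (eval x))ᵀ * P.map (eval x))
    (by rwa [det_map_transpose_mul_map])
  rw [rank_transpose_mul_self] at hrank
  exact ne_of_lt hx hrank

/-- If `f₁,…,f_K ∈ Γ^M_N` are linearly independent with
`K > max{N, (M+1)^{N-1}}`, then the vectors `D_{θ_1}f, …, D_{θ_N}f` are
linearly independent, the polynomial `θ ↦ det(J(θ)ᵀ J(θ))` is not identically
zero, and `{θ : rank J(θ) ≤ N-1}` is nowhere dense in `ℝ^N`. -/
theorem jacobian_full_rank (N M K : ℕ)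
    (f : Fin K → MvPolynomial (Fin N) ℝ)
    (hf : ∀ l, f l ∈ GammaMN N M)
    (hindep : LinearIndependent ℝ f)
    (hK : K > max N ((M + 1) ^ (N - 1))) :
    LinearIndependent ℝ
      (fun i : Fin N => fun l : Fin K => (pderiv i) (f l)) ∧
    ¬ (∀ θ : Fin N → ℝ,
        Matrix.det ((Matrix.of fun (l : Fin K) (i : Fin N) =>
          eval θ ((pderiv i) (f l)))ᵀ
          * Matrix.of fun (l : Fin K) (i : Fin N) => eval θ ((pderiv i) (f l)))
        = 0) ∧
    IsNowhereDense {θ : Fin N → ℝ |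
      Matrix.rank (Matrix.of fun (l : Fin K) (i : Fin N) =>
        eval θ ((pderiv i) (f l))) ≤ N - 1} := by
  set P : Matrix (Fin K) (Fin N) (MvPolynomial (Fin N) ℝ) := of fun l i ↦ pderiv i (f l)
  have hKM : (M + 1) ^ (N - 1) < K := (max_lt_iff.1 hK).2
  have hP : ∀ v, P *ᵥ v = 0 → v = 0 := fun v hv ↦ by
    by_contra hv0
    have hDv : ∀ l, ∑ j, v j * pderiv j (f l) = 0 := fun l ↦ by
      simpa [P, mulVec, dotProduct, mul_comm] using congrFun hv l
    exact hKM.not_ge (by simpa using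
      card_le_of_linearIndependent_of_sum_mul_pderiv_eq_zero hf hindep hv0 hDv)
  have hdet := det_transpose_mul_self_ne_zero hP
  refine ⟨Fintype.linearIndependent_iff.2 fun g hg i ↦ ?_, fun h ↦ hdet ?_, ?_⟩
  · have hCg : P *ᵥ (C ∘ g) = 0 := funext fun l ↦ by
      simpa [P, mulVec, dotProduct, smul_eq_C_mul, mul_comm] using congrFun hg l
    exact C_injective (Fin N) ℝ (by simpa using congrFun (hP _ hCg) i)
  · exact MvPolynomial.funext fun θ ↦ by rw [map_zero, ← det_map_transpose_mul_map]; exact h θ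
  · have hN : N ≠ 0 := by
      rintro rfl
      have := hindep.card_le_one_of_isEmpty
      simp at this hKM
      omega
    refine (isNowhereDense_setOf_rank_map_eval_lt hdet).mono
      fun θ (hθ : (P.map (eval θ)).rank ≤ N - 1) ↦ ?_
    show _ < Fintype.card (Fin N)
    rw [Fintype.card_fin]
    omega
end

section
/- Let f: ℝ^N → ℝ^N be C^1, θ† a point with f(θ†) = 0 and ∇f(θ†) invertible, and let (f_M) be C^1 maps with ‖f_M − f‖_∞ → 0 and ‖∇f_M − ∇f‖_∞ → 0 on [-1,1]^N, with θ† ∈ (-1,1)^N. Then for all large M there exist global minimizers θ*_M of Σ_i (f_M)_i^2 over [-1,1]^N with θ*_M → θ† and ‖f_M(θ*_M)‖ → 0. -/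
/-!
Near `θ†` the maps `f_M` are, for large `M`, uniformly `C¹`-close to `f`, so on a small ball
around `θ†` they are approximated by the invertible linear map `∇f(θ†)` with a constant below
the inverse norm of a right inverse. The quantitative Newton (surjectivity) lemma then yields a
zero `θ*_M` of `f_M` with `‖θ*_M - θ†‖ = O(‖f_M(θ†)‖)`, and `f_M(θ†) → f(θ†) = 0`. A zero of
`f_M` is trivially a global minimizer of `Σᵢ (f_M)ᵢ²`.
-/

open Filter Metric Topology Set
open scoped NNReal

section ZerosOfPerturbations

variable {E : Type*} [NormedAddCommGroup E] [NormedSpace ℝ E]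
  {F : Type*} [NormedAddCommGroup F] [NormedSpace ℝ F]

theorem Convex.approximatesLinearOn_of_norm_fderiv_sub_le {g : E → F} {A : E →L[ℝ] F}
    {s : Set E} {c : ℝ≥0} (hs : Convex ℝ s) (hg : ∀ x ∈ s, DifferentiableAt ℝ g x)
    (hA : ∀ x ∈ s, ‖fderiv ℝ g x - A‖ ≤ c) : ApproximatesLinearOn g A s c :=
  fun _ hx _ hy => hs.norm_image_sub_le_of_norm_fderiv_le' hg hA hy hx

theorem ApproximatesLinearOn.exists_eq_zero_dist_le [CompleteSpace E] {g : E → F}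
    {A : E →L[ℝ] F} {a : E} {r : ℝ} {c : ℝ≥0}
    (hg : ApproximatesLinearOn g A (closedBall a r) c) (Ainv : A.NonlinearRightInverse)
    (hc : c < (Ainv.nnnorm : ℝ)⁻¹) (hga : ‖g a‖ ≤ ((Ainv.nnnorm : ℝ)⁻¹ - c) * r) :
    ∃ x, g x = 0 ∧ dist x a ≤ ‖g a‖ / ((Ainv.nnnorm : ℝ)⁻¹ - c) := by
  set δ := (Ainv.nnnorm : ℝ)⁻¹ - c
  have hδ : 0 < δ := sub_pos.2 hc
  have hρr : ‖g a‖ / δ ≤ r := (div_le_iff₀' hδ).2 hga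
  -- on the ball of radius `‖g a‖ / δ` the surjectivity radius `δ * ‖g a‖ / δ` just reaches `0`
  have hsurj := ApproximatesLinearOn.surjOn_closedBall_of_nonlinearRightInverse
    (hg.mono_set (closedBall_subset_closedBall hρr)) Ainv (by positivity) Subset.rfl
  have h0 : (0 : F) ∈ closedBall (g a) (δ * (‖g a‖ / δ)) := by
    rw [mul_div_cancel₀ _ hδ.ne', mem_closedBall, dist_zero_left]
  obtain ⟨x, hx, hgx⟩ := hsurj h0
  exact ⟨x, hgx, hx⟩

variable {ι : Type*} {l : Filter ι} {f : E → F} {fs : ι → E → F} {S : Set E} {a : E}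

theorem exists_closedBall_eventually_approximatesLinearOn (hS : S ∈ 𝓝 a)
    (hf : ContinuousAt (fderiv ℝ f) a) (hfs : ∀ i, Differentiable ℝ (fs i))
    (hconv : TendstoUniformlyOn (fun i => fderiv ℝ (fs i)) (fderiv ℝ f) l S)
    {c : ℝ≥0} (hc : 0 < c) :
    ∃ r > 0, closedBall a r ⊆ S ∧
      ∀ᶠ i in l, ApproximatesLinearOn (fs i) (fderiv ℝ f a) (closedBall a r) c := by
  have hc2 : (0 : ℝ) < c / 2 := by positivity
  obtain ⟨ρ, hρ, hρS⟩ := Metric.mem_nhds_iff.1 hS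
  obtain ⟨ρ', hρ', hρ'f⟩ := Metric.continuousAt_iff.1 hf _ hc2
  have hball : closedBall a (min ρ ρ' / 2) ⊆ ball a ρ ∩ ball a ρ' :=
    (closedBall_subset_ball (half_lt_self (lt_min hρ hρ'))).trans
      (subset_inter (ball_subset_ball (min_le_left _ _)) (ball_subset_ball (min_le_right _ _)))
  refine ⟨min ρ ρ' / 2, by positivity, hball.trans (inter_subset_left.trans hρS), ?_⟩
  filter_upwards [Metric.tendstoUniformlyOn_iff.1 hconv _ hc2] with i hi
  refine (convex_closedBall a _).approximatesLinearOn_of_norm_fderiv_sub_le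
    (fun x _ => (hfs i).differentiableAt) fun x hx => ?_
  obtain ⟨hxρ, hxρ'⟩ := hball hx
  calc ‖fderiv ℝ (fs i) x - fderiv ℝ f a‖
      ≤ dist (fderiv ℝ f x) (fderiv ℝ (fs i) x) + dist (fderiv ℝ f x) (fderiv ℝ f a) := by
        rw [dist_comm, dist_eq_norm, dist_eq_norm]; exact norm_sub_le_norm_sub_add_norm_sub _ _ _
    _ ≤ c / 2 + c / 2 := add_le_add (hi x (hρS hxρ)).le (hρ'f hxρ').le
    _ = c := add_halves _

theorem exists_eventually_exists_eq_zero_dist_le [CompleteSpace E] [CompleteSpace F]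
    (hS : S ∈ 𝓝 a) (hf : ContinuousAt (fderiv ℝ f) a)
    (hsurj : Function.Surjective (fderiv ℝ f a)) (hfs : ∀ i, Differentiable ℝ (fs i))
    (hconv : TendstoUniformlyOn (fun i => fderiv ℝ (fs i)) (fderiv ℝ f) l S)
    (hfsa : Tendsto (fun i => fs i a) l (𝓝 0)) :
    ∃ K : ℝ, ∀ᶠ i in l, ∃ x ∈ S, fs i x = 0 ∧ dist x a ≤ K * ‖fs i a‖ := by
  set Ainv := (fderiv ℝ f a).nonlinearRightInverseOfSurjective (LinearMap.range_eq_top.2 hsurj)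
  have hpos : 0 < Ainv.nnnorm := (fderiv ℝ f a).nonlinearRightInverseOfSurjective_nnnorm_pos _
  set c : ℝ≥0 := Ainv.nnnorm⁻¹ / 2
  have hc : c < (Ainv.nnnorm : ℝ)⁻¹ := by
    rw [← NNReal.coe_inv, NNReal.coe_lt_coe]; exact NNReal.half_lt_self (by positivity)
  set δ := (Ainv.nnnorm : ℝ)⁻¹ - c
  have hδ : 0 < δ := sub_pos.2 hc
  obtain ⟨r, hr, hrS, happrox⟩ :=
    exists_closedBall_eventually_approximatesLinearOn hS hf hfs hconv (c := c) (by positivity)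
  have hsmall : ∀ᶠ i in l, ‖fs i a‖ ≤ δ * r :=
    (tendsto_order.1 (by simpa using hfsa.norm)).2 _ (by positivity) |>.mono fun _ => le_of_lt
  refine ⟨δ⁻¹, ?_⟩
  filter_upwards [happrox, hsmall] with i hi hsm
  obtain ⟨x, hx0, hxa⟩ := hi.exists_eq_zero_dist_le Ainv hc hsm
  refine ⟨x, hrS (mem_closedBall.2 (hxa.trans ((div_le_iff₀' hδ).2 hsm))), hx0, ?_⟩
  rwa [inv_mul_eq_div]

end ZerosOfPerturbations

theorem isMinOn_sum_sq_of_eq_zero {α ι : Type*} [Fintype ι] {g : α → EuclideanSpace ℝ ι}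
    {s : Set α} {a : α} (ha : g a = 0) : IsMinOn (fun x => ∑ i, (g x i) ^ 2) s a :=
  fun x _ => by simpa [ha] using Finset.sum_nonneg fun i _ => sq_nonneg (g x i)

theorem euclideanSpace_cube_mem_nhds {ι : Type*} [Finite ι] {θ : EuclideanSpace ℝ ι}
    (hθ : ∀ i, θ i ∈ Ioo (-1 : ℝ) 1) :
    {x : EuclideanSpace ℝ ι | ∀ i, x i ∈ Icc (-1 : ℝ) 1} ∈ 𝓝 θ := by
  simp only [ofPred_forall]
  exact iInter_mem.2 fun i =>
    (PiLp.continuous_apply 2 _ i).continuousAt.preimage_mem_nhds (Icc_mem_nhds (hθ i).1 (hθ i).2)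

/-- N-dimensional convergence of approximate least-squares minimizers:
if `f : ℝ^N → ℝ^N` is `C¹`, `f(θ†) = 0` with `∇f(θ†)` invertible and
`θ† ∈ (-1,1)^N`, and `f_M → f`, `∇f_M → ∇f` uniformly on `[-1,1]^N`, then for
all large `M` there are global minimizers `θ*_M` of `Σᵢ (f_M)ᵢ²` over
`[-1,1]^N` with `θ*_M → θ†` and `‖f_M(θ*_M)‖ → 0`. -/
theorem multi_dim_ls_minimizer_convergence
    {N : ℕ}
    (f : EuclideanSpace ℝ (Fin N) → EuclideanSpace ℝ (Fin N))
    (hf : ContDiff ℝ 1 f)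
    (θd : EuclideanSpace ℝ (Fin N))
    (hθ : ∀ i, θd i ∈ Set.Ioo (-1 : ℝ) 1)
    (hroot : f θd = 0)
    (hinv : IsUnit (fderiv ℝ f θd).toLinearMap)
    (fM : ℕ → EuclideanSpace ℝ (Fin N) → EuclideanSpace ℝ (Fin N))
    (hfM : ∀ M, ContDiff ℝ 1 (fM M))
    (hconv : TendstoUniformlyOn fM f atTop
      {θ | ∀ i, θ i ∈ Set.Icc (-1 : ℝ) 1})
    (hconv' : TendstoUniformlyOn (fun M θ => fderiv ℝ (fM M) θ)
      (fun θ => fderiv ℝ f θ) atTop {θ | ∀ i, θ i ∈ Set.Icc (-1 : ℝ) 1}) :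
    ∃ (N₀ : ℕ) (θs : ℕ → EuclideanSpace ℝ (Fin N)),
      (∀ M ≥ N₀, (∀ i, θs M i ∈ Set.Icc (-1 : ℝ) 1) ∧
        IsMinOn (fun θ => ∑ i, (fM M θ i) ^ 2)
          {θ | ∀ i, θ i ∈ Set.Icc (-1 : ℝ) 1} (θs M)) ∧
      Tendsto θs atTop (nhds θd) ∧
      Tendsto (fun M => ‖fM M (θs M)‖) atTop (nhds 0) := by
  set S := {θ : EuclideanSpace ℝ (Fin N) | ∀ i, θ i ∈ Icc (-1 : ℝ) 1}
  have hS : S ∈ 𝓝 θd := euclideanSpace_cube_mem_nhds hθ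
  have hfθd : Tendsto (fun M => fM M θd) atTop (𝓝 0) :=
    hroot ▸ hconv.tendsto_at (mem_of_mem_nhds hS)
  have hsurj : Function.Surjective (fderiv ℝ f θd) := ((Module.End.isUnit_iff _).1 hinv).2
  obtain ⟨K, hK⟩ := exists_eventually_exists_eq_zero_dist_le hS
    (hf.continuous_fderiv one_ne_zero).continuousAt hsurj
    (fun M => (hfM M).differentiable one_ne_zero) hconv' hfθd
  obtain ⟨θs, hθs⟩ := hK.choice
  obtain ⟨N₀, hN₀⟩ := eventually_atTop.1 hθs
  refine ⟨N₀, θs, fun M hM => ⟨(hN₀ M hM).1, isMinOn_sum_sq_of_eq_zero (hN₀ M hM).2.1⟩,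
    ?_, ?_⟩
  · rw [tendsto_iff_dist_tendsto_zero]
    refine squeeze_zero' (Eventually.of_forall fun _ => dist_nonneg) (hθs.mono fun _ h => h.2.2) ?_
    simpa using hfθd.norm.const_mul K
  · exact tendsto_const_nhds.congr' (hθs.mono fun _ h => by simp [h.2.1])
end
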